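/- arXiv:2510.10291 — 3 statements merged into one kernel-verified Lean document; each statement's English description precedes it below -/
import Mathlib

section
/- Let Γ* = ⟨Γ, t | t⁻¹ht = φ(h) for h ∈ H₁⟩ be the HNN extension of a finitely generated group Γ relative to an isomorphism φ : H₁ → H₂ between subgroups of Γ, with generating set S = F ∪ {t, t⁻¹} where F generates Γ. Then in the Schreier graph Sch(Γ*, H₁, S), every path from the vertex H₁t to the vertex H₁t⁻¹ passes through the vertex H₁. -/
/-! Say that `g ∈ Γ*` starts with `t⁻¹` if it has a reduced form `a t⁻¹ g₁ t^ε₂ g₂ ⋯` with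
`a ∈ H₁`. This is invariant under left multiplication by `H₁`, so it is a property of the vertex
`H₁g`. The element `t⁻¹` starts with `t⁻¹`; `t` does not, because by Britton's lemma all reduced
forms of an element share their pattern of exponents of `t`. Right multiplication by a letter of
`S` only changes the end of a reduced form, so it keeps the leading `a t⁻¹` unless the whole word
collapses into `H₁`. Hence every edge leaving the vertices that start with `t⁻¹` ends at `H₁`. -/

/-- The Schreier graph of a group `Γ` with respect to a subgroup `H` and a set `S`:
vertices are the right cosets `Hg`, with an edge between `Hg` and `Hgs` for `s ∈ S`. -/
def schreierGraph {Γ : Type*} [Group Γ] (H : Subgroup Γ) (S : Set Γ) :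
    SimpleGraph (Quotient (QuotientGroup.rightRel H)) where
  Adj x y := x ≠ y ∧ ∃ s ∈ S, ∃ g : Γ,
      (x = Quotient.mk _ g ∧ y = Quotient.mk _ (g * s)) ∨
      (y = Quotient.mk _ g ∧ x = Quotient.mk _ (g * s))
  symm := by constructor; rintro x y ⟨hne, s, hs, g, h⟩; exact ⟨hne.symm, s, hs, g, h.symm⟩
  loopless := by constructor; rintro x ⟨hne, _⟩; exact hne rfl

namespace HNNExtension.NormalWord.ReducedWord

variable {G : Type*} [Group G] {A B : Subgroup G} (φ : A ≃* B)

theorem prod_snoc (h : G) (L : List (ℤˣ × G)) (c : ℤˣ × G) (ch ch') :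
    (⟨h, L ++ [c], ch⟩ : ReducedWord G A B).prod φ =
      (⟨h, L, ch'⟩ : ReducedWord G A B).prod φ * (t ^ (c.1 : ℤ) * of c.2) := by
  simp [ReducedWord.prod, mul_assoc]

theorem isChain_replace_last_snd {L : List (ℤˣ × G)} {v : ℤˣ} {x : G} (x' : G)
    (ch : (L ++ [(v, x)]).IsChain fun a b => a.2 ∈ toSubgroup A B a.1 → a.1 = b.1) :
    (L ++ [(v, x')]).IsChain fun a b => a.2 ∈ toSubgroup A B a.1 → a.1 = b.1 := by
  rw [List.isChain_append] at ch ⊢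
  refine ⟨ch.1, List.isChain_singleton _, fun p hp q hq => ?_⟩
  obtain rfl : q = (v, x') := by simpa using hq.symm
  exact ch.2.2 p hp (v, x) (by simp)

theorem exists_prod_mul_of {w : ReducedWord G A B} (hw : w.toList ≠ []) (f : G) :
    ∃ w' : ReducedWord G A B, w'.prod φ = w.prod φ * of f ∧ w'.head = w.head ∧
      w'.toList.map Prod.fst = w.toList.map Prod.fst := by
  obtain ⟨h, L, ch⟩ := w
  obtain ⟨L', ⟨v, x⟩, rfl⟩ := (List.eq_nil_or_concat' L).resolve_left hw
  have ch' := ch.prefix (List.prefix_append _ _)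
  refine ⟨⟨h, L' ++ [(v, x * f)], isChain_replace_last_snd _ ch⟩, ?_, rfl, by simp⟩
  rw [prod_snoc φ _ _ _ _ ch', prod_snoc φ _ _ _ _ ch']
  simp [mul_assoc]

theorem tpow_mul_of_mul_tpow_neg (v : ℤˣ) (x : toSubgroup A B v) :
    (t ^ (v : ℤ) * of (x : G) * t ^ (-v : ℤ) : HNNExtension G A B φ) =
      of (toSubgroupEquiv φ v x : G) := by
  rcases Int.units_eq_one_or v with rfl | rfl <;>
    simp only [Units.val_one, Units.val_neg, zpow_neg, zpow_one, neg_neg]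
  exacts [(equiv_eq_conj (φ := φ) x).symm, (equiv_symm_eq_conj (φ := φ) x).symm]

theorem exists_prod_mul_tpow {w : ReducedWord G A B} (hw : w.toList ≠ []) (u : ℤˣ) :
    (∃ w' : ReducedWord G A B, w'.prod φ = w.prod φ * t ^ (u : ℤ) ∧ w'.head = w.head ∧
      (w'.toList.map Prod.fst).head? = (w.toList.map Prod.fst).head?) ∨
    ∃ v, ∃ x : toSubgroup A B v, w.toList = [(v, (x : G))] ∧
      w.prod φ * t ^ (u : ℤ) = of (w.head * toSubgroupEquiv φ v x) := by
  obtain ⟨h, L, ch⟩ := w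
  obtain ⟨L', ⟨v, x⟩, rfl⟩ := (List.eq_nil_or_concat' L).resolve_left hw
  have ch' := ch.prefix (List.prefix_append _ _)
  by_cases hcancel : x ∈ toSubgroup A B v ∧ u = -v
  · obtain ⟨hx, rfl⟩ := hcancel
    have hprod : (⟨h, L' ++ [(v, x)], ch⟩ : ReducedWord G A B).prod φ * t ^ ((-v : ℤˣ) : ℤ) =
        (⟨h, L', ch'⟩ : ReducedWord G A B).prod φ * of (toSubgroupEquiv φ v ⟨x, hx⟩ : G) := by
      rw [prod_snoc φ _ _ _ _ ch', ← tpow_mul_of_mul_tpow_neg φ v ⟨x, hx⟩]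
      simp [mul_assoc]
    rcases eq_or_ne L' [] with rfl | hL'
    · right
      exact ⟨v, ⟨x, hx⟩, rfl, hprod.trans (by simp [ReducedWord.prod])⟩
    · left
      obtain ⟨w', hw'prod, hw'head, hw'fst⟩ := exists_prod_mul_of φ (w := ⟨h, L', ch'⟩) hL' _
      refine ⟨w', hw'prod.trans hprod.symm, hw'head, ?_⟩
      rw [hw'fst, List.map_append, List.head?_append_of_ne_nil _ (by simpa using hL')]
  · left
    have hchain : (L' ++ [(v, x)] ++ [(u, 1)]).IsChain
        fun (a b : ℤˣ × G) => a.2 ∈ toSubgroup A B a.1 → a.1 = b.1 := by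
      refine ch.append (List.isChain_singleton _) ?_
      simp only [List.getLast?_append, List.getLast?_singleton, Option.some_or,
        Option.mem_def, Option.some_inj, List.head?_cons, forall_eq']
      intro hx
      by_contra hvu
      exact hcancel ⟨hx, by simp [Int.units_ne_iff_eq_neg.1 hvu]⟩
    refine ⟨⟨h, L' ++ [(v, x)] ++ [(u, 1)], hchain⟩, ?_, rfl, ?_⟩
    · rw [prod_snoc φ _ _ _ _ ch]
      simp
    · simp

end HNNExtension.NormalWord.ReducedWord

namespace HNNExtension

open NormalWord

variable {G : Type*} [Group G] {A B : Subgroup G} (φ : A ≃* B)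

def startsWithInvT : Set (HNNExtension G A B φ) :=
  {g | ∃ w : ReducedWord G A B, w.prod φ = g ∧ w.head ∈ A ∧
    (w.toList.map Prod.fst).head? = some (-1)}

theorem inv_t_mem_startsWithInvT : (t⁻¹ : HNNExtension G A B φ) ∈ startsWithInvT φ :=
  ⟨⟨1, [(-1, 1)], List.isChain_singleton _⟩, by simp [ReducedWord.prod], one_mem _, rfl⟩

theorem t_notMem_startsWithInvT : (t : HNNExtension G A B φ) ∉ startsWithInvT φ := by
  rintro ⟨w, hw, -, hfst⟩
  let wt : ReducedWord G A B := ⟨1, [(1, 1)], List.isChain_singleton _⟩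
  have hwt : w.prod φ = wt.prod φ := by rw [hw]; simp [wt, ReducedWord.prod]
  rw [(ReducedWord.map_fst_eq_and_of_prod_eq φ hwt).1] at hfst
  simp [wt] at hfst

variable {φ}

theorem of_mul_mem_startsWithInvT {a : G} (ha : a ∈ A) {g : HNNExtension G A B φ}
    (hg : g ∈ startsWithInvT φ) : of a * g ∈ startsWithInvT φ := by
  obtain ⟨⟨h, L, ch⟩, rfl, hh, hfst⟩ := hg
  exact ⟨⟨a * h, L, ch⟩, by simp [ReducedWord.prod, mul_assoc], mul_mem ha hh, hfst⟩

theorem mul_mem_startsWithInvT {g s : HNNExtension G A B φ} (hg : g ∈ startsWithInvT φ)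
    (hs : s ∈ (of : G →* HNNExtension G A B φ).range ∨ ∃ u : ℤˣ, s = t ^ (u : ℤ))
    (hgs : g * s ∉ A.map (of : G →* HNNExtension G A B φ)) :
    g * s ∈ startsWithInvT φ := by
  obtain ⟨w, rfl, hA, hfst⟩ := hg
  have hw : w.toList ≠ [] := by rintro h; simp [h] at hfst
  rcases hs with ⟨f, rfl⟩ | ⟨u, rfl⟩
  · obtain ⟨w', hprod, hhead, hfst'⟩ := w.exists_prod_mul_of φ hw f
    exact ⟨w', hprod, hhead ▸ hA, hfst' ▸ hfst⟩
  · rcases w.exists_prod_mul_tpow φ hw u with ⟨w', hprod, hhead, hfst'⟩ | ⟨v, x, hL, hprod⟩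
    · exact ⟨w', hprod, hhead ▸ hA, hfst'.trans hfst⟩
    · obtain rfl : v = -1 := by simpa [hL] using hfst
      exact absurd ⟨_, mul_mem hA (toSubgroupEquiv φ (-1) x).2, hprod.symm⟩ hgs

end HNNExtension

namespace schreierGraph

variable {Γ : Type*} [Group Γ] {H : Subgroup Γ} {S P : Set Γ}

theorem mem_of_mk_eq_mk (hP : ∀ h ∈ H, ∀ g ∈ P, h * g ∈ P) {g g' : Γ} (hg : g ∈ P)
    (he : Quotient.mk (QuotientGroup.rightRel H) g = Quotient.mk _ g') : g' ∈ P := by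
  have hH : g' * g⁻¹ ∈ H := QuotientGroup.rightRel_apply.1 (Quotient.exact he)
  simpa using hP _ hH g hg

theorem mk_eq_mk_one_iff {g : Γ} :
    Quotient.mk (QuotientGroup.rightRel H) g = Quotient.mk _ 1 ↔ g ∈ H := by
  rw [Quotient.eq, QuotientGroup.rightRel_apply, one_mul, inv_mem_iff]

theorem mem_image_mk_of_adj (hP : ∀ h ∈ H, ∀ g ∈ P, h * g ∈ P)
    (hPS : ∀ g ∈ P, ∀ s, s ∈ S ∨ s⁻¹ ∈ S → g * s ∉ H → g * s ∈ P)
    {x y : Quotient (QuotientGroup.rightRel H)} (hx : x ∈ Quotient.mk _ '' P)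
    (hxy : (schreierGraph H S).Adj x y) (hy : y ≠ Quotient.mk _ 1) :
    y ∈ Quotient.mk _ '' P := by
  obtain ⟨g, hg, rfl⟩ := hx
  obtain ⟨-, s, hs, g', ⟨hg', rfl⟩ | ⟨rfl, hg'⟩⟩ := hxy
  · exact ⟨g' * s, hPS g' (mem_of_mk_eq_mk hP hg hg') s (.inl hs)
      (mt mk_eq_mk_one_iff.2 hy), rfl⟩
  · have hgs : g' * s * s⁻¹ ∈ P :=
      hPS _ (mem_of_mk_eq_mk hP hg hg') s⁻¹ (.inr (by simpa using hs))
        (by simpa using mt mk_eq_mk_one_iff.2 hy)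
    exact ⟨g', by simpa using hgs, rfl⟩

theorem mk_one_mem_support (hP : ∀ h ∈ H, ∀ g ∈ P, h * g ∈ P)
    (hPS : ∀ g ∈ P, ∀ s, s ∈ S ∨ s⁻¹ ∈ S → g * s ∉ H → g * s ∈ P)
    {g₁ g₂ : Γ} (h₁ : g₁ ∈ P) (h₂ : g₂ ∉ P)
    (p : (schreierGraph H S).Walk (Quotient.mk _ g₁) (Quotient.mk _ g₂)) :
    Quotient.mk _ 1 ∈ p.support := by
  by_contra h1
  obtain ⟨d, hd, hfst, hsnd⟩ := p.exists_boundary_dart (Quotient.mk _ '' P) ⟨g₁, h₁, rfl⟩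
    fun ⟨g, hg, he⟩ => h₂ (mem_of_mk_eq_mk hP hg he)
  exact hsnd <| mem_image_mk_of_adj hP hPS hfst d.adj
    fun he => h1 (he ▸ p.dart_snd_mem_support_of_mem_darts hd)

end schreierGraph

open HNNExtension in
theorem stmt_17_general {G : Type*} [Group G] (A B : Subgroup G) (φ : A ≃* B)
    (F : Finset G)
    (Hsub : Subgroup (HNNExtension G A B φ))
    (hHsub : Hsub = A.map (of : G →* HNNExtension G A B φ))
    (S : Set (HNNExtension G A B φ))
    (hS : S = (of : G →* HNNExtension G A B φ) '' (F : Set G) ∪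
      {t, (t : HNNExtension G A B φ)⁻¹}) :
    ∀ p : (schreierGraph Hsub S).Walk
        (Quotient.mk (QuotientGroup.rightRel Hsub) (t : HNNExtension G A B φ))
        (Quotient.mk (QuotientGroup.rightRel Hsub) (t : HNNExtension G A B φ)⁻¹),
      Quotient.mk (QuotientGroup.rightRel Hsub) (1 : HNNExtension G A B φ) ∈ p.support := by
  subst hHsub hS
  intro p
  have hletter : ∀ s : HNNExtension G A B φ, s ∈ of '' (F : Set G) ∪ {t, t⁻¹} ∨
      s⁻¹ ∈ of '' (F : Set G) ∪ {t, t⁻¹} → s ∈ of.range ∨ ∃ u : ℤˣ, s = t ^ (u : ℤ) := by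
    rintro s ((⟨f, -, rfl⟩ | rfl | rfl) | (⟨f, -, hf⟩ | hs | hs))
    · exact .inl ⟨f, rfl⟩
    · exact .inr ⟨1, by simp⟩
    · exact .inr ⟨-1, by simp⟩
    · exact .inl ⟨f⁻¹, by simp [hf]⟩
    · exact .inr ⟨-1, by simp [← hs]⟩
    · exact .inr ⟨1, by simpa using hs⟩
  simpa using schreierGraph.mk_one_mem_support
    (fun _ hh _ hg => by
      obtain ⟨a, ha, rfl⟩ := Subgroup.mem_map.1 hh
      exact of_mul_mem_startsWithInvT ha hg)
    (fun _ hg s hs hgs => mul_mem_startsWithInvT hg (hletter s hs) hgs)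
    (inv_t_mem_startsWithInvT φ) (t_notMem_startsWithInvT φ) p.reverse

open HNNExtension in
/-- In the HNN extension `Γ* = ⟨Γ, t | t⁻¹ht = φ(h)⟩` with generating set `S = F ∪ {t,t⁻¹}`,
every path in the Schreier graph of `H₁` from the vertex `H₁t` to the vertex `H₁t⁻¹` passes
through the vertex `H₁`. -/
theorem stmt_17 {G : Type*} [Group G] (A B : Subgroup G) (φ : A ≃* B)
    (F : Finset G) (hsym : ∀ s ∈ F, s⁻¹ ∈ F) (hgen : Subgroup.closure (F : Set G) = ⊤)
    (Hsub : Subgroup (HNNExtension G A B φ))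
    (hHsub : Hsub = A.map (of : G →* HNNExtension G A B φ))
    (S : Set (HNNExtension G A B φ))
    (hS : S = (of : G →* HNNExtension G A B φ) '' (F : Set G) ∪
      {t, (t : HNNExtension G A B φ)⁻¹}) :
    ∀ p : (schreierGraph Hsub S).Walk
        (Quotient.mk (QuotientGroup.rightRel Hsub) (t : HNNExtension G A B φ))
        (Quotient.mk (QuotientGroup.rightRel Hsub) (t : HNNExtension G A B φ)⁻¹),
      Quotient.mk (QuotientGroup.rightRel Hsub) (1 : HNNExtension G A B φ) ∈ p.support :=
  stmt_17_general A B φ F Hsub hHsub S hS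
end

section
/- Every finitely generated group quasi-isometric to the hyperbolic plane (equivalently, quasi-isometric to the pentagon model graph) is extraterrestrial. -/
/-!
Cut the pentagon model along the line `{0} × ℤ`. Along a path of length `k` starting at `(m, n)` the
real part `m·2ⁿ` of the embedding into the upper half-plane moves by less than `2ⁿ⁺ᵏ`, so the points
`(±jX, −lD)`, `X` a large power of two, are far from this line and from each other. Through the
quasi-isometry, `U` and `O` are group elements near the sample points left and right of the line,
matched horizontally at a distance that does not depend on `r`, and `F` is the preimage of a
neighbourhood of the segment `{0} × [−R, T]`. A path from `U` to `O` must come near the line, and if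
it avoids `F` it does so above height `T` or below `−R`, which costs length `r` because heights
change by at most one per pentagon edge. Fibres of the quasi-isometry are uniformly finite, so `|F|`
is linear in the number `L` of levels of sample points, and `M` columns make `|U| = ML ≥ m|F|`.
-/

open SimpleGraph Pointwise

/-- An `(m,k,r)`-UFO in a graph `G`: a triple `(U,F,O)` of disjoint finite vertex sets such that
`|U| ≥ m|F|`, there is a complete matching between `U` and `O` by paths of length at most `k`,
and every path from `U` to `O` avoiding `F` has length at least `r`. -/
def IsUFO {V : Type*} (G : SimpleGraph V) (m k r : ℕ) (U F O : Set V) : Prop :=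
  U.Nonempty ∧ U.Finite ∧ F.Finite ∧ O.Finite ∧
    Disjoint U F ∧ Disjoint U O ∧ Disjoint F O ∧
    m * F.ncard ≤ U.ncard ∧
    (∃ f : V → V, Set.BijOn f U O ∧ ∀ u ∈ U, G.Reachable u (f u) ∧ G.dist u (f u) ≤ k) ∧
    ∀ u ∈ U, ∀ o ∈ O, ∀ p : G.Walk u o, (∀ x ∈ p.support, x ∉ F) → r ≤ p.length

/-- A graph is extraterrestrial if for all `m` there is `k` such that for all `r` it admits an
`(m,k,r)`-UFO. -/
def Extraterrestrial {V : Type*} (G : SimpleGraph V) : Prop :=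
  ∀ m : ℕ, ∃ k : ℕ, ∀ r : ℕ, ∃ U F O : Set V, IsUFO G m k r U F O
/-- The Cayley graph of a group with respect to a (symmetric) set `S`. -/
def cayleyGraph (Γ : Type*) [Group Γ] (S : Set Γ) : SimpleGraph Γ where
  Adj g h := g ≠ h ∧ (g⁻¹ * h ∈ S ∨ h⁻¹ * g ∈ S)
  symm := ⟨by rintro g h ⟨hne, hs⟩; exact ⟨hne.symm, hs.symm⟩⟩
  loopless := ⟨by rintro g ⟨hne, _⟩; exact hne rfl⟩
/-- The pentagon model: the graph with vertex set `ℤ²`, edges `{(m,n),(m+1,n)}` and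
`{(m,n),(2m,n-1)}`. -/
def pentagonGraph : SimpleGraph (ℤ × ℤ) where
  Adj p q := p ≠ q ∧
    ((p.2 = q.2 ∧ (q.1 = p.1 + 1 ∨ p.1 = q.1 + 1)) ∨
      (q.2 = p.2 - 1 ∧ q.1 = 2 * p.1) ∨ (p.2 = q.2 - 1 ∧ p.1 = 2 * q.1))
  symm := ⟨by
    rintro p q ⟨hne, h⟩
    refine ⟨hne.symm, ?_⟩
    rcases h with ⟨h1, h2⟩ | h | h
    · exact Or.inl ⟨h1.symm, h2.symm⟩
    · exact Or.inr (Or.inr h)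
    · exact Or.inr (Or.inl h)⟩
  loopless := ⟨by rintro p ⟨hne, _⟩; exact hne rfl⟩

namespace pentagonGraph

lemma adj_add_one (x n : ℤ) : pentagonGraph.Adj (x, n) (x + 1, n) :=
  ⟨by simp, Or.inl ⟨rfl, Or.inl rfl⟩⟩

lemma adj_two_mul (x n : ℤ) : pentagonGraph.Adj (x, n) (2 * x, n - 1) :=
  ⟨by simp only [ne_eq, Prod.mk.injEq]; omega, Or.inr (Or.inl ⟨rfl, rfl⟩)⟩

lemma exists_walk_add_fst (x n : ℤ) (k : ℕ) :
    ∃ w : pentagonGraph.Walk (x, n) (x + k, n), w.length = k := by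
  induction k with
  | zero => exact ⟨Walk.nil.copy rfl (by simp), by simp⟩
  | succ k ih =>
    obtain ⟨w, hw⟩ := ih
    exact ⟨(w.concat (adj_add_one _ n)).copy rfl (by simp [add_assoc]), by simp [hw]⟩

lemma exists_walk_of_snd_eq (x y n : ℤ) :
    ∃ w : pentagonGraph.Walk (x, n) (y, n), w.length = (y - x).natAbs := by
  wlog hxy : x ≤ y generalizing x y
  · obtain ⟨w, hw⟩ := this y x (by omega)
    exact ⟨w.reverse, by rw [Walk.length_reverse, hw, ← Int.natAbs_neg, neg_sub]⟩
  obtain ⟨k, rfl⟩ : ∃ k : ℕ, y = x + k := ⟨(y - x).toNat, by omega⟩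
  simpa using exists_walk_add_fst x n k

lemma dist_le_natAbs_sub_fst (x y n : ℤ) :
    pentagonGraph.dist (x, n) (y, n) ≤ (y - x).natAbs := by
  obtain ⟨w, hw⟩ := exists_walk_of_snd_eq x y n
  exact hw ▸ dist_le w

lemma connected : pentagonGraph.Connected := by
  have to_axis (p : ℤ × ℤ) : pentagonGraph.Reachable p (0, p.2) :=
    ⟨(exists_walk_of_snd_eq p.1 0 p.2).choose⟩
  have along_axis (n : ℤ) : pentagonGraph.Reachable (0, n) (0, 0) := by
    induction n using Int.induction_on with
    | zero => rfl
    | succ i ih => exact .trans (by simpa using (adj_two_mul 0 (i + 1)).reachable) ih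
    | pred i ih => exact .trans (by simpa using (adj_two_mul 0 (-i)).reachable.symm) ih
  refine (connected_iff _).2 ⟨fun p q => ?_, ⟨(0, 0)⟩⟩
  exact ((to_axis p).trans (along_axis _)).trans ((to_axis q).trans (along_axis _)).symm

lemma natAbs_sub_snd_le_length {p q : ℤ × ℤ} (w : pentagonGraph.Walk p q) :
    (p.2 - q.2).natAbs ≤ w.length := by
  induction w with
  | nil => simp
  | cons h _ ih =>
    rw [Walk.length_cons]
    rcases h.2 with ⟨h, -⟩ | ⟨h, -⟩ | ⟨h, -⟩ <;> omega

lemma natAbs_sub_snd_le_dist (p q : ℤ × ℤ) : (p.2 - q.2).natAbs ≤ pentagonGraph.dist p q := by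
  obtain ⟨w, hw⟩ := connected.exists_walk_length_eq_dist p q
  exact hw ▸ natAbs_sub_snd_le_length w

/-- Real part of the quasi-isometric embedding `(m, n) ↦ m·2ⁿ + 2ⁿi` into the upper half-plane. -/
noncomputable def re (p : ℤ × ℤ) : ℝ := p.1 * 2 ^ p.2

lemma re_zero_fst (n : ℤ) : re (0, n) = 0 := by simp [re]

lemma abs_re_sub_le_of_adj {p q : ℤ × ℤ} (h : pentagonGraph.Adj p q) :
    |re p - re q| ≤ 2 ^ p.2 := by
  obtain ⟨-, h⟩ := h
  have h2 : (0 : ℝ) < 2 ^ p.2 := zpow_pos two_pos _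
  obtain ⟨p1, p2⟩ := p
  obtain ⟨q1, q2⟩ := q
  simp only at h h2 ⊢
  rcases h with ⟨rfl, rfl | rfl⟩ | ⟨rfl, rfl⟩ | ⟨rfl, rfl⟩
  · simp [re, add_mul]
  · simp [re, add_mul]
  all_goals
    rw [show re _ - re _ = 0 by
      simp only [re, zpow_sub_one₀ (two_ne_zero (α := ℝ))]; push_cast; ring]
    simpa using zpow_nonneg zero_le_two _

lemma abs_re_sub_le_length {p q : ℤ × ℤ} (w : pentagonGraph.Walk p q) :
    |re p - re q| ≤ 2 ^ p.2 * (2 ^ w.length - 1) := by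
  induction w with
  | nil => simp
  | @cons a b c h w ih =>
    have hab := abs_re_sub_le_of_adj h
    have hb : (2 : ℝ) ^ b.2 ≤ 2 ^ a.2 * 2 := by
      rw [← zpow_add_one₀ two_ne_zero]
      have := natAbs_sub_snd_le_length (Walk.cons h Walk.nil)
      simp only [Walk.length_cons, Walk.length_nil] at this
      exact zpow_le_zpow_right₀ one_le_two (by omega)
    have hw : (1 : ℝ) ≤ 2 ^ w.length := one_le_pow₀ one_le_two
    calc |re a - re c| ≤ |re a - re b| + |re b - re c| := abs_sub_le _ _ _
      _ ≤ 2 ^ a.2 + 2 ^ a.2 * 2 * (2 ^ w.length - 1) :=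
        add_le_add hab (ih.trans (mul_le_mul_of_nonneg_right hb (by linarith)))
      _ = 2 ^ a.2 * (2 ^ (Walk.cons h w).length - 1) := by rw [Walk.length_cons, pow_succ]; ring

lemma abs_re_sub_le_dist (p q : ℤ × ℤ) :
    |re p - re q| ≤ 2 ^ p.2 * (2 ^ pentagonGraph.dist p q - 1) := by
  obtain ⟨w, hw⟩ := connected.exists_walk_length_eq_dist p q
  exact hw ▸ abs_re_sub_le_length w

lemma lt_dist_of_le_abs_re_sub {p q : ℤ × ℤ} {s : ℕ} (h : 2 ^ s * 2 ^ p.2 ≤ |re p - re q|) :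
    s < pentagonGraph.dist p q := by
  have h2 : (0 : ℝ) < 2 ^ p.2 := zpow_pos two_pos _
  have := (h.trans (abs_re_sub_le_dist p q))
  have : (2 : ℝ) ^ s < 2 ^ pentagonGraph.dist p q := by nlinarith
  exact (pow_lt_pow_iff_right₀ one_lt_two).1 this

lemma lt_dist_of_snd_eq {p q : ℤ × ℤ} {s : ℕ} (h : p.2 = q.2) (hs : 2 ^ s ≤ |p.1 - q.1|) :
    s < pentagonGraph.dist p q := by
  refine lt_dist_of_le_abs_re_sub ?_
  rw [re, re, ← h, ← sub_mul, abs_mul, abs_of_pos (zpow_pos two_pos p.2 : (0 : ℝ) < 2 ^ p.2)]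
  gcongr
  exact_mod_cast hs

lemma lt_dist_axis {p : ℤ × ℤ} {s : ℕ} (hs : 2 ^ s ≤ |p.1|) (n : ℤ) :
    s < pentagonGraph.dist p (0, n) := by
  refine lt_dist_of_le_abs_re_sub ?_
  rw [re_zero_fst, sub_zero, re, abs_mul, abs_of_pos (zpow_pos two_pos p.2 : (0 : ℝ) < 2 ^ p.2)]
  gcongr
  exact_mod_cast hs

lemma abs_fst_le_of_dist_axis_le {q : ℤ × ℤ} {n : ℤ} {d : ℕ}
    (h : pentagonGraph.dist q (0, n) ≤ d) : |q.1| ≤ 4 ^ d := by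
  have hre := abs_re_sub_le_dist (0, n) q
  rw [re_zero_fst, zero_sub, abs_neg, re, abs_mul,
    abs_of_pos (zpow_pos two_pos q.2 : (0 : ℝ) < 2 ^ q.2), dist_comm] at hre
  have hlevel : n ≤ q.2 + d := by
    have := natAbs_sub_snd_le_dist q (0, n)
    simp only at this
    omega
  have hn : (2 : ℝ) ^ n ≤ 2 ^ q.2 * 2 ^ d := by
    rw [← zpow_natCast, ← zpow_add₀ two_ne_zero]
    exact zpow_le_zpow_right₀ one_le_two hlevel
  have hd : (2 : ℝ) ^ pentagonGraph.dist q (0, n) ≤ 2 ^ d := pow_le_pow_right₀ one_le_two h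
  have hq : (0 : ℝ) < 2 ^ q.2 := zpow_pos two_pos _
  have : (|q.1| : ℝ) ≤ 4 ^ d := by
    rw [show (4 : ℝ) ^ d = 2 ^ d * 2 ^ d by rw [← mul_pow]; norm_num]
    have h1 : (1 : ℝ) ≤ 2 ^ pentagonGraph.dist q (0, n) := one_le_pow₀ one_le_two
    nlinarith [mul_le_mul hn (sub_le_sub_right hd 1) (by linarith) (by positivity)]
  exact_mod_cast this

lemma exists_mem_support_fst_eq_zero {p q : ℤ × ℤ} (w : pentagonGraph.Walk p q)
    (hp : p.1 ≤ 0) (hq : 0 ≤ q.1) : ∃ z ∈ w.support, z.1 = 0 := by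
  induction w with
  | nil => exact ⟨_, Walk.start_mem_support _, by omega⟩
  | @cons a b c h w ih =>
    rcases hp.lt_or_eq with hp | hp
    · have hb : b.1 ≤ 0 := by
        obtain ⟨-, h⟩ := h
        rcases h with ⟨-, h⟩ | ⟨-, h⟩ | ⟨-, h⟩ <;> omega
      obtain ⟨z, hz, hz0⟩ := ih hb hq
      exact ⟨z, Walk.support_cons _ _ ▸ List.mem_cons_of_mem _ hz, hz0⟩
    · exact ⟨a, Walk.start_mem_support _, hp⟩

lemma exists_dist_axis_le_dist {p q : ℤ × ℤ} (h : p.1 * q.1 ≤ 0) :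
    ∃ n, pentagonGraph.dist p (0, n) ≤ pentagonGraph.dist p q := by
  obtain ⟨w, hw⟩ := connected.exists_walk_length_eq_dist p q
  obtain ⟨z, hz, hz0⟩ : ∃ z ∈ w.support, z.1 = 0 := by
    rcases lt_trichotomy p.1 0 with hp | hp | hp
    · exact exists_mem_support_fst_eq_zero w hp.le (by nlinarith)
    · exact ⟨p, w.start_mem_support, hp⟩
    · obtain ⟨z, hz, hz0⟩ := exists_mem_support_fst_eq_zero w.reverse (by nlinarith) hp.le
      exact ⟨z, by simpa [Walk.support_reverse] using hz, hz0⟩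
  refine ⟨z.2, ?_⟩
  calc pentagonGraph.dist p (0, z.2) = pentagonGraph.dist p z := by rw [← hz0]
    _ ≤ (w.takeUntil z hz).length := dist_le _
    _ ≤ pentagonGraph.dist p q := hw ▸ w.length_takeUntil_le_length hz

lemma mul_fst_pos_of_dist_le {p q : ℤ × ℤ} {d : ℕ} (hp : 2 ^ d ≤ |p.1|)
    (h : pentagonGraph.dist p q ≤ d) : 0 < p.1 * q.1 := by
  by_contra! hpq
  obtain ⟨n, hn⟩ := exists_dist_axis_le_dist hpq
  exact (lt_dist_axis hp n).not_ge (hn.trans h)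

end pentagonGraph

lemma Set.InjOn.exists_bijOn_image {ι α β : Type*} [Nonempty ι] {s : Set ι} {u : ι → α}
    {o : ι → β} (hu : Set.InjOn u s) (ho : Set.InjOn o s) :
    ∃ φ : α → β, Set.BijOn φ (u '' s) (o '' s) ∧ ∀ i ∈ s, φ (u i) = o i := by
  have hφ : ∀ i ∈ s, o (Function.invFunOn u s (u i)) = o i :=
    fun i hi => congrArg o (hu.leftInvOn_invFunOn hi)
  refine ⟨o ∘ Function.invFunOn u s, ⟨?_, ?_, ?_⟩, hφ⟩
  · rintro _ ⟨i, hi, rfl⟩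
    exact ⟨i, hi, (hφ i hi).symm⟩
  · rintro _ ⟨i, hi, rfl⟩ _ ⟨j, hj, rfl⟩ h
    simp only [Function.comp_apply, hφ i hi, hφ j hj] at h
    rw [ho hi hj h]
  · rintro _ ⟨i, hi, rfl⟩
    exact ⟨u i, ⟨i, hi, rfl⟩, hφ i hi⟩

lemma Set.finite_preimage_and_ncard_le {α β : Type*} {f : α → β} {N : ℕ}
    (hfib : ∀ q, (f ⁻¹' {q}).Finite ∧ (f ⁻¹' {q}).ncard ≤ N) (s : Finset β) :
    (f ⁻¹' s).Finite ∧ (f ⁻¹' s).ncard ≤ N * s.card := by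
  classical
  have hfin : (f ⁻¹' s).Finite := s.finite_toSet.preimage' fun b _ => (hfib b).1
  refine ⟨hfin, ?_⟩
  rw [Set.ncard_eq_toFinset_card _ hfin]
  refine Finset.card_le_mul_card_image_of_maps_to (f := f) (by simp) N fun b _ => ?_
  rw [← Set.ncard_coe_finset]
  exact (Set.ncard_le_ncard (fun a ha => (Finset.mem_filter.1 ha).2) (hfib b).1).trans (hfib b).2

lemma IsUFO.of_image {V ι : Type*} [Nonempty ι] {G : SimpleGraph V} {m k r : ℕ} {I : Finset ι}
    {u o : ι → V} {F : Set V} (hI : I.Nonempty) (hu : Set.InjOn u I) (ho : Set.InjOn o I)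
    (huo : ∀ i ∈ I, ∀ j ∈ I, u i ≠ o j) (hF : F.Finite) (huF : ∀ i ∈ I, u i ∉ F)
    (hoF : ∀ i ∈ I, o i ∉ F) (hcard : m * F.ncard ≤ I.card)
    (hmatch : ∀ i ∈ I, G.Reachable (u i) (o i) ∧ G.dist (u i) (o i) ≤ k)
    (hsep : ∀ i ∈ I, ∀ j ∈ I, ∀ p : G.Walk (u i) (o j), (∀ x ∈ p.support, x ∉ F) → r ≤ p.length) :
    IsUFO G m k r (u '' I) F (o '' I) := by
  obtain ⟨φ, hφ, hφu⟩ := hu.exists_bijOn_image ho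
  refine ⟨(Finset.coe_nonempty.2 hI).image u, I.finite_toSet.image u, hF,
    I.finite_toSet.image o, ?_, ?_, ?_, ?_, ⟨φ, hφ, ?_⟩, ?_⟩
  · exact Set.disjoint_left.2 (by rintro _ ⟨i, hi, rfl⟩; exact huF i hi)
  · exact Set.disjoint_left.2 (by rintro _ ⟨i, hi, rfl⟩ ⟨j, hj, he⟩; exact huo i hi j hj he.symm)
  · exact Set.disjoint_right.2 (by rintro _ ⟨i, hi, rfl⟩; exact hoF i hi)
  · rwa [hu.ncard_image, Set.ncard_coe_finset]
  · rintro _ ⟨i, hi, rfl⟩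
    rw [hφu i hi]
    exact hmatch i hi
  · rintro _ ⟨i, hi, rfl⟩ _ ⟨j, hj, rfl⟩
    exact hsep i hi j hj

section Cayley

variable {Γ : Type*} [Group Γ]

@[simps]
def cayleyGraph.mulLeft (S : Set Γ) (a : Γ) : cayleyGraph Γ S →g cayleyGraph Γ S where
  toFun g := a * g
  map_rel' := by
    rintro u v ⟨hne, h⟩
    exact ⟨fun e => hne (mul_left_cancel e), by simpa [mul_inv_rev, mul_assoc] using h⟩

lemma cayleyGraph.connected_of_closure_eq_top {S : Set Γ} (hgen : Subgroup.closure S = ⊤) :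
    (cayleyGraph Γ S).Connected := by
  have from_one (g : Γ) : (cayleyGraph Γ S).Reachable 1 g := by
    induction (hgen ▸ Subgroup.mem_top g : g ∈ Subgroup.closure S)
      using Subgroup.closure_induction with
    | mem x hx =>
      by_cases hx1 : x = 1
      · rw [hx1]
      · exact Adj.reachable ⟨Ne.symm hx1, Or.inl (by simpa using hx)⟩
    | one => rfl
    | mul x y _ _ hx hy => exact hx.trans (by simpa using hy.map (cayleyGraph.mulLeft S x))
    | inv x _ hx => simpa using (hx.map (cayleyGraph.mulLeft S x⁻¹)).symm
  exact (connected_iff _).2 ⟨fun g h => (from_one g).symm.trans (from_one h), ⟨1⟩⟩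

lemma cayleyGraph.inv_mul_mem_pow_length [DecidableEq Γ] {S : Finset Γ} {g h : Γ}
    (w : (cayleyGraph Γ S).Walk g h) : g⁻¹ * h ∈ insert 1 (S ∪ S⁻¹) ^ w.length := by
  induction w with
  | nil => simp
  | @cons a b c hab w ih =>
    rw [Walk.length_cons, pow_succ', show a⁻¹ * c = (a⁻¹ * b) * (b⁻¹ * c) by group]
    refine Finset.mul_mem_mul (Finset.mem_insert_of_mem ?_) ih
    rcases hab.2 with h | h
    · exact Finset.mem_union_left _ h
    · exact Finset.mem_union_right _ (by simpa using Finset.inv_mem_inv h)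

lemma cayleyGraph.finite_fiber_and_ncard_le [DecidableEq Γ] {S : Finset Γ} {β : Type*}
    (hconn : (cayleyGraph Γ S).Connected) {f : Γ → β} {t : ℕ}
    (hf : ∀ g h, f g = f h → (cayleyGraph Γ S).dist g h ≤ t) (q : β) :
    (f ⁻¹' {q}).Finite ∧ (f ⁻¹' {q}).ncard ≤ (insert 1 (S ∪ S⁻¹) ^ t).card := by
  rcases (f ⁻¹' {q}).eq_empty_or_nonempty with h | ⟨g₀, hg₀⟩
  · simp [h]
  have hsub : f ⁻¹' {q} ⊆ ↑(g₀ • insert 1 (S ∪ S⁻¹) ^ t) := by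
    intro g hg
    obtain ⟨w, hw⟩ := hconn.exists_walk_length_eq_dist g₀ g
    have hmem := Finset.pow_subset_pow_right (Finset.mem_insert_self _ _)
      (hw ▸ hf g₀ g (hg₀.trans hg.symm)) (inv_mul_mem_pow_length w)
    rw [Finset.mem_coe, ← mul_inv_cancel_left g₀ g]
    exact Finset.smul_mem_smul_finset hmem
  refine ⟨(Finset.finite_toSet _).subset hsub, ?_⟩
  calc (f ⁻¹' {q}).ncard ≤ (g₀ • insert 1 (S ∪ S⁻¹) ^ t).card :=
        (Set.ncard_le_ncard hsub (Finset.finite_toSet _)).trans_eq (Set.ncard_coe_finset _)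
    _ = _ := Finset.card_smul_finset _ _

end Cayley

def axisWall {V : Type*} (f : V → ℤ × ℤ) (ρ : ℕ) (lo hi : ℤ) : Set V :=
  {v | ∃ n ∈ Set.Icc lo hi, pentagonGraph.dist (f v) (0, n) ≤ ρ}

section Wall

variable {V : Type*} {G : SimpleGraph V} {f : V → ℤ × ℤ}

lemma axisWall_subset_preimage (ρ : ℕ) (lo hi : ℤ) :
    axisWall f ρ lo hi ⊆ f ⁻¹' ↑(Finset.Icc (-4 ^ ρ) (4 ^ ρ) ×ˢ Finset.Icc (lo - ρ) (hi + ρ)) := by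
  rintro v ⟨n, ⟨hlo, hhi⟩, hn⟩
  have hfst := abs_le.1 (pentagonGraph.abs_fst_le_of_dist_axis_le hn)
  have hsnd := (pentagonGraph.natAbs_sub_snd_le_dist (f v) (0, n)).trans hn
  simp only [Set.mem_preimage, Finset.coe_product, Finset.coe_Icc, Set.mem_prod, Set.mem_Icc]
  omega

lemma axisWall_finite_and_ncard_le {N : ℕ}
    (hfib : ∀ q, (f ⁻¹' {q}).Finite ∧ (f ⁻¹' {q}).ncard ≤ N) (ρ : ℕ) (lo hi : ℤ) :
    (axisWall f ρ lo hi).Finite ∧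
      (axisWall f ρ lo hi).ncard ≤ N * ((2 * 4 ^ ρ + 1) * (hi - lo + 2 * ρ + 1).toNat) := by
  obtain ⟨hfin, hcard⟩ := Set.finite_preimage_and_ncard_le hfib
    (Finset.Icc (-4 ^ ρ) (4 ^ ρ) ×ˢ Finset.Icc (lo - ρ) (hi + ρ))
  refine ⟨hfin.subset (axisWall_subset_preimage ρ lo hi),
    (Set.ncard_le_ncard (axisWall_subset_preimage ρ lo hi) hfin).trans (hcard.trans_eq ?_)⟩
  rw [Finset.card_product, Int.card_Icc, Int.card_Icc]
  have h4 : ((4 ^ ρ : ℕ) : ℤ) = 4 ^ ρ := by push_cast; rfl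
  congr 2 <;> omega

lemma exists_mem_support_dist_axis_le {ρ : ℕ}
    (hstep : ∀ a b, G.Adj a b → pentagonGraph.dist (f a) (f b) ≤ ρ) {u v : V} (w : G.Walk u v)
    (hu : (f u).1 ≤ 0) (hv : 0 ≤ (f v).1) :
    ∃ x ∈ w.support, ∃ n, pentagonGraph.dist (f x) (0, n) ≤ ρ := by
  induction w with
  | nil =>
    obtain ⟨n, hn⟩ := pentagonGraph.exists_dist_axis_le_dist (p := f _) (q := f _) (by nlinarith)
    exact ⟨_, Walk.start_mem_support _, n, hn.trans (by simp)⟩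
  | @cons a b c h w ih =>
    by_cases hb : (f b).1 ≤ 0
    · obtain ⟨x, hx, hn⟩ := ih hb hv
      exact ⟨x, by simp [hx], hn⟩
    · obtain ⟨n, hn⟩ :=
        pentagonGraph.exists_dist_axis_le_dist (p := f a) (q := f b) (by nlinarith)
      exact ⟨a, Walk.start_mem_support _, n, hn.trans (hstep a b h)⟩

lemma le_length_of_forall_notMem_axisWall {K ρ r : ℕ} {lo hi : ℤ}
    (hstep : ∀ a b, G.Adj a b → pentagonGraph.dist (f a) (f b) ≤ ρ)
    (hup : ∀ u v, pentagonGraph.dist (f u) (f v) ≤ K * G.dist u v + K) {u v : V}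
    (w : G.Walk u v) (hu : (f u).1 ≤ 0) (hv : 0 ≤ (f v).1)
    (hlo : lo + (K * r + ρ : ℕ) < (f u).2) (hhi : (f u).2 + (K * r + ρ : ℕ) < hi)
    (hw : ∀ x ∈ w.support, x ∉ axisWall f ρ lo hi) : r ≤ w.length := by
  classical
  obtain ⟨x, hx, n, hn⟩ := exists_mem_support_dist_axis_le hstep w hu hv
  have hn_out : n < lo ∨ hi < n := by
    by_contra! h
    exact hw x hx ⟨n, h, hn⟩
  by_contra! hr
  have hux : K * (G.dist u x + 1) ≤ K * r := by
    have := (dist_le (w.takeUntil x hx)).trans (w.length_takeUntil_le_length hx)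
    exact Nat.mul_le_mul_left K (by omega)
  have hlevel := pentagonGraph.natAbs_sub_snd_le_dist (f u) (0, n)
  have htri := pentagonGraph.connected.dist_triangle (u := f u) (v := f x) (w := (0, n))
  have := hup u x
  simp only at hlevel
  rw [mul_add_one] at hux
  omega

end Wall

def samplePoint (X D : ℕ) (j : ℤ) (l : ℕ) : ℤ × ℤ := (j * X, -(l * D))

section SamplePoints

variable {X D s : ℕ}

lemma lt_dist_samplePoint (hX : 2 ^ s ≤ X) (hD : s < D) {j j' : ℤ} {l l' : ℕ}
    (h : (j, l) ≠ (j', l')) :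
    s < pentagonGraph.dist (samplePoint X D j l) (samplePoint X D j' l') := by
  by_cases hl : l = l'
  · subst hl
    have hj : j - j' ≠ 0 := sub_ne_zero.2 fun e => h (by rw [e])
    refine pentagonGraph.lt_dist_of_snd_eq rfl ?_
    calc (2 : ℤ) ^ s ≤ X := by exact_mod_cast hX
      _ ≤ |j - j'| * X := le_mul_of_one_le_left (by positivity) (Int.one_le_abs hj)
      _ = |j * X - j' * X| := by rw [← sub_mul, abs_mul, abs_of_nonneg (Int.natCast_nonneg X)]
  · have hlevel :=
      pentagonGraph.natAbs_sub_snd_le_dist (samplePoint X D j l) (samplePoint X D j' l')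
    have hl' : 1 ≤ ((l : ℤ) - l').natAbs := by omega
    rw [samplePoint, samplePoint, show -((l : ℤ) * D) - -(l' * D) = -((l - l') * D) by ring,
      Int.natAbs_neg, Int.natAbs_mul, Int.natAbs_natCast] at hlevel
    exact hD.trans_le ((Nat.le_mul_of_pos_left D hl').trans hlevel)

lemma lt_dist_samplePoint_axis (hX : 2 ^ s ≤ X) {j : ℤ} (hj : j ≠ 0) (l : ℕ) (n : ℤ) :
    s < pentagonGraph.dist (samplePoint X D j l) (0, n) := by
  refine pentagonGraph.lt_dist_axis ?_ n
  calc (2 : ℤ) ^ s ≤ X := by exact_mod_cast hX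
    _ ≤ |j| * X := le_mul_of_one_le_left (by positivity) (Int.one_le_abs hj)
    _ = |j * X| := by rw [abs_mul, abs_of_nonneg (Int.natCast_nonneg X)]

lemma dist_samplePoint_neg_le (j : ℤ) (l : ℕ) :
    pentagonGraph.dist (samplePoint X D (-j) l) (samplePoint X D j l) ≤ 2 * j.natAbs * X := by
  refine (pentagonGraph.dist_le_natAbs_sub_fst _ _ _).trans_eq ?_
  rw [show j * X - -j * X = 2 * j * X by ring, Int.natAbs_mul, Int.natAbs_mul]
  simp

variable {V : Type*} {f : V → ℤ × ℤ} {γ : ℤ × ℤ → V} {K : ℕ}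

lemma eq_of_quasiInverse_samplePoint_eq (hγ : ∀ p, pentagonGraph.dist p (f (γ p)) ≤ K)
    (hX : 2 ^ (2 * K) ≤ X) (hD : 2 * K < D) {j j' : ℤ} {l l' : ℕ}
    (h : γ (samplePoint X D j l) = γ (samplePoint X D j' l')) : j = j' ∧ l = l' := by
  by_contra hne
  have hsep := lt_dist_samplePoint hX hD fun e => hne (Prod.ext_iff.1 e)
  have htri := pentagonGraph.connected.dist_triangle (u := samplePoint X D j l)
    (v := f (γ (samplePoint X D j l))) (w := samplePoint X D j' l')
  have h1 := hγ (samplePoint X D j l)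
  have h2 := hγ (samplePoint X D j' l')
  rw [h, dist_comm (u := f _)] at htri
  rw [h] at h1
  omega

lemma lt_dist_quasiInverse_samplePoint_axis (hγ : ∀ p, pentagonGraph.dist p (f (γ p)) ≤ K)
    (hX : 2 ^ (s + K) ≤ X) {j : ℤ} (hj : j ≠ 0) (l : ℕ) (n : ℤ) :
    s < pentagonGraph.dist (f (γ (samplePoint X D j l))) (0, n) := by
  have hfar := lt_dist_samplePoint_axis (D := D) hX hj l n
  have htri := pentagonGraph.connected.dist_triangle (u := samplePoint X D j l)
    (v := f (γ (samplePoint X D j l))) (w := (0, n))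
  have := hγ (samplePoint X D j l)
  omega

lemma mul_fst_quasiInverse_samplePoint_pos (hγ : ∀ p, pentagonGraph.dist p (f (γ p)) ≤ K)
    (hX : 2 ^ K ≤ X) {j : ℤ} (hj : j ≠ 0) (l : ℕ) :
    0 < j * (f (γ (samplePoint X D j l))).1 := by
  have hXpos : (0 : ℤ) < X := by have := Nat.one_le_two_pow.trans hX; omega
  have hfar : (2 : ℤ) ^ K ≤ |(samplePoint X D j l).1| := by
    calc (2 : ℤ) ^ K ≤ X := by exact_mod_cast hX
      _ ≤ |j| * X := le_mul_of_one_le_left hXpos.le (Int.one_le_abs hj)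
      _ = |j * X| := by rw [abs_mul, abs_of_pos hXpos]
  have := pentagonGraph.mul_fst_pos_of_dist_le hfar (hγ _)
  rw [samplePoint, mul_right_comm] at this
  exact pos_of_mul_pos_left this hXpos.le

lemma natAbs_snd_quasiInverse_samplePoint_add_le (hγ : ∀ p, pentagonGraph.dist p (f (γ p)) ≤ K)
    (j : ℤ) (l : ℕ) : ((f (γ (samplePoint X D j l))).2 + l * D).natAbs ≤ K := by
  have := (pentagonGraph.natAbs_sub_snd_le_dist _ _).trans (hγ (samplePoint X D j l))
  rw [show (samplePoint X D j l).2 = -(l * D) from rfl] at this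
  omega

lemma dist_quasiInverse_samplePoint_neg_le (hγ : ∀ p, pentagonGraph.dist p (f (γ p)) ≤ K)
    (j : ℤ) (l : ℕ) :
    pentagonGraph.dist (f (γ (samplePoint X D (-j) l))) (f (γ (samplePoint X D j l))) ≤
      2 * j.natAbs * X + 2 * K := by
  have h₁ := pentagonGraph.connected.dist_triangle (u := f (γ (samplePoint X D (-j) l)))
    (v := samplePoint X D (-j) l) (w := f (γ (samplePoint X D j l)))
  have h₂ := pentagonGraph.connected.dist_triangle (u := samplePoint X D (-j) l)
    (v := samplePoint X D j l) (w := f (γ (samplePoint X D j l)))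
  have h₃ := hγ (samplePoint X D (-j) l)
  rw [dist_comm] at h₃
  have := hγ (samplePoint X D j l)
  have := dist_samplePoint_neg_le (X := X) (D := D) j l
  omega

lemma le_length_of_forall_notMem_axisWall_samplePoint {G : SimpleGraph V} {ρ r T R : ℕ}
    (hstep : ∀ a b, G.Adj a b → pentagonGraph.dist (f a) (f b) ≤ ρ)
    (hup : ∀ u v, pentagonGraph.dist (f u) (f v) ≤ K * G.dist u v + K)
    (hγ : ∀ p, pentagonGraph.dist p (f (γ p)) ≤ K) (hX : 2 ^ K ≤ X) {j j' : ℤ} {l l' : ℕ}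
    (hj : j < 0) (hj' : 0 < j') (hT : K * r + ρ + K < T) (hR : l * D + T ≤ R)
    (w : G.Walk (γ (samplePoint X D j l)) (γ (samplePoint X D j' l')))
    (hw : ∀ x ∈ w.support, x ∉ axisWall f ρ (-R) T) : r ≤ w.length := by
  have hu := mul_fst_quasiInverse_samplePoint_pos (D := D) hγ hX hj.ne l
  have hv := mul_fst_quasiInverse_samplePoint_pos (D := D) hγ hX hj'.ne' l'
  have hlevel := natAbs_snd_quasiInverse_samplePoint_add_le (X := X) (D := D) hγ j l
  refine le_length_of_forall_notMem_axisWall hstep hup w (by nlinarith) (by nlinarith) ?_ ?_ hw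
  all_goals push_cast; omega

end SamplePoints

theorem extraterrestrial_of_quasiIsometry_pentagonGraph {V : Type*} {G : SimpleGraph V}
    (hG : G.Connected) {f : V → ℤ × ℤ} {γ : ℤ × ℤ → V} {K N : ℕ}
    (hlow : ∀ u v, G.dist u v ≤ K * pentagonGraph.dist (f u) (f v) + K)
    (hup : ∀ u v, pentagonGraph.dist (f u) (f v) ≤ K * G.dist u v + K)
    (hγ : ∀ p, pentagonGraph.dist p (f (γ p)) ≤ K)
    (hfib : ∀ q, (f ⁻¹' {q}).Finite ∧ (f ⁻¹' {q}).ncard ≤ N) : Extraterrestrial G := by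
  have hstep : ∀ a b, G.Adj a b → pentagonGraph.dist (f a) (f b) ≤ 2 * K := fun a b h => by
    simpa [two_mul, dist_eq_one_iff_adj.2 h] using hup a b
  intro m
  -- `X` and `D` keep sample points `2K` apart and `3K` away from the axis; `T` exceeds the height
  -- a walk of length `r` can climb, and `L` gives the `2K`-neighbourhood of `{0} × [-R, T]`
  -- exactly `L(D + 1)` rows.
  set X := 2 ^ (3 * K)
  set D := 2 * K + 1
  set M := m * N * (2 * 4 ^ (2 * K) + 1) * (D + 1) + 1
  refine ⟨K * (2 * M * X + 2 * K) + K, fun r => ?_⟩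
  set T := K * r + 3 * K + 1
  set L := 2 * T + 4 * K + 1
  set R := L * D + T
  have hX : ∀ s ≤ 3 * K, 2 ^ s ≤ X := fun s hs => Nat.pow_le_pow_right two_pos hs
  have hinj {j j' : ℤ} {l l' : ℕ} := eq_of_quasiInverse_samplePoint_eq (j := j) (j' := j')
    (l := l) (l' := l') hγ (hX _ (by omega)) (show 2 * K < D by omega)
  have hfar {j : ℤ} (hj : j ≠ 0) (l : ℕ) (n : ℤ) :=
    lt_dist_quasiInverse_samplePoint_axis (D := D) hγ (hX (2 * K + K) (by omega)) hj l n
  obtain ⟨hFfin, hFcard⟩ := axisWall_finite_and_ncard_le hfib (2 * K) (-R) T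
  refine ⟨_, _, _, IsUFO.of_image (I := Finset.range M ×ˢ Finset.range L)
    (u := fun i => γ (samplePoint X D (-(i.1 + 1 : ℤ)) i.2))
    (o := fun i => γ (samplePoint X D (i.1 + 1 : ℤ) i.2))
    ⟨(0, 0), Finset.mem_product.2 ⟨Finset.mem_range.2 (by omega), Finset.mem_range.2 (by omega)⟩⟩
    (fun i _ i' _ h => Prod.ext (by have := (hinj h).1; omega) (hinj h).2)
    (fun i _ i' _ h => Prod.ext (by have := (hinj h).1; omega) (hinj h).2)
    (fun i _ i' _ h => by have := (hinj h).1; omega) hFfin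
    (fun i _ ⟨n, _, hn⟩ => (hfar (by omega) _ n).not_ge hn)
    (fun i _ ⟨n, _, hn⟩ => (hfar (by omega) _ n).not_ge hn) ?_ (fun i hi => ?_) ?_⟩
  · calc m * (axisWall f (2 * K) (-R) T).ncard
        ≤ m * (N * ((2 * 4 ^ (2 * K) + 1) * ((T : ℤ) - -R + 2 * (2 * K : ℕ) + 1).toNat)) :=
          Nat.mul_le_mul_left m hFcard
      _ = m * N * (2 * 4 ^ (2 * K) + 1) * (D + 1) * L := by
          rw [show ((T : ℤ) - -R + 2 * (2 * K : ℕ) + 1).toNat = L * (D + 1) by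
            simp only [R, L]; push_cast; ring_nf; omega]
          ring
      _ ≤ M * L := Nat.mul_le_mul_right L (Nat.le_succ _)
      _ = (Finset.range M ×ˢ Finset.range L).card := by simp
  · have hi1 : i.1 + 1 ≤ M := Finset.mem_range.1 (Finset.mem_product.1 hi).1
    refine ⟨hG _ _, (hlow _ _).trans ?_⟩
    have hd := dist_quasiInverse_samplePoint_neg_le (X := X) (D := D) hγ (i.1 + 1 : ℤ) i.2
    rw [show (i.1 + 1 : ℤ).natAbs = i.1 + 1 by omega] at hd
    have : 2 * (i.1 + 1) * X ≤ 2 * M * X := by gcongr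
    gcongr
    omega
  · intro i hi i' _ p hp
    have hl : i.2 * D ≤ L * D :=
      Nat.mul_le_mul_right D (Finset.mem_range.1 (Finset.mem_product.1 hi).2).le
    exact le_length_of_forall_notMem_axisWall_samplePoint hstep hup hγ (hX K (by omega))
      (by omega) (by omega) (by omega) (by omega) p hp

lemma natCast_le_mul_add_of_le {x y K : ℕ} {A B : ℝ} (h : (x : ℝ) ≤ A * y + B) (hA : A ≤ K)
    (hB : B ≤ K) : x ≤ K * y + K := by
  have : (x : ℝ) ≤ K * y + K := h.trans (add_le_add (by gcongr) hB)
  exact_mod_cast this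

theorem stmt_18_general {Γ : Type*} [Group Γ] (S : Finset Γ)
    (hgen : Subgroup.closure (S : Set Γ) = ⊤)
    (f : Γ → ℤ × ℤ) (A B C : ℝ) (hA : 0 < A)
    (hqi : ∀ u v : Γ,
      (1 / A) * ((cayleyGraph Γ (S : Set Γ)).dist u v : ℝ) - B ≤
        (pentagonGraph.dist (f u) (f v) : ℝ) ∧
      (pentagonGraph.dist (f u) (f v) : ℝ) ≤
        A * ((cayleyGraph Γ (S : Set Γ)).dist u v : ℝ) + B)
    (hdense : ∀ p : ℤ × ℤ, ∃ v : Γ, (pentagonGraph.dist p (f v) : ℝ) ≤ C) :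
    Extraterrestrial (cayleyGraph Γ (S : Set Γ)) := by
  classical
  set K := ⌈A⌉₊ + ⌈A * B⌉₊ + ⌈B⌉₊ + ⌈C⌉₊
  have hAK : A ≤ K := (Nat.le_ceil A).trans (Nat.cast_le.2 (by omega))
  have hABK : A * B ≤ K := (Nat.le_ceil _).trans (Nat.cast_le.2 (by omega))
  have hBK : B ≤ K := (Nat.le_ceil B).trans (Nat.cast_le.2 (by omega))
  have hCK : C ≤ K := (Nat.le_ceil C).trans (Nat.cast_le.2 (by omega))
  have hlow (u v : Γ) : (cayleyGraph Γ S).dist u v ≤ K * pentagonGraph.dist (f u) (f v) + K :=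
    natCast_le_mul_add_of_le (by
      have := mul_le_mul_of_nonneg_left (hqi u v).1 hA.le
      rw [mul_sub, ← mul_assoc, mul_one_div_cancel hA.ne', one_mul] at this
      linarith) hAK hABK
  have hup (u v : Γ) := natCast_le_mul_add_of_le (hqi u v).2 hAK hBK
  choose γ hγ using hdense
  have hconn := cayleyGraph.connected_of_closure_eq_top hgen
  exact extraterrestrial_of_quasiIsometry_pentagonGraph hconn hlow hup
    (fun p => Nat.cast_le.1 ((hγ p).trans hCK))
    (cayleyGraph.finite_fiber_and_ncard_le hconn fun g h hgh => by simpa [hgh] using hlow g h)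

/-- Every finitely generated group quasi-isometric to the hyperbolic plane (equivalently, to
the pentagon model graph) is extraterrestrial. -/
theorem stmt_18 {Γ : Type*} [Group Γ] (S : Finset Γ)
    (hsym : ∀ s ∈ S, s⁻¹ ∈ S) (hgen : Subgroup.closure (S : Set Γ) = ⊤)
    (f : Γ → ℤ × ℤ) (A B C : ℝ) (hA : 0 < A) (hB : 0 < B) (hC : 0 < C)
    (hqi : ∀ u v : Γ,
      (1 / A) * ((cayleyGraph Γ (S : Set Γ)).dist u v : ℝ) - B ≤
        (pentagonGraph.dist (f u) (f v) : ℝ) ∧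
      (pentagonGraph.dist (f u) (f v) : ℝ) ≤
        A * ((cayleyGraph Γ (S : Set Γ)).dist u v : ℝ) + B)
    (hdense : ∀ p : ℤ × ℤ, ∃ v : Γ, (pentagonGraph.dist p (f v) : ℝ) ≤ C) :
    Extraterrestrial (cayleyGraph Γ (S : Set Γ)) :=
  stmt_18_general S hgen f A B C hA hqi hdense
end

section
/- Let Γ be a group and C ≤ Γ a subgroup, and consider the Z₂-vector space E(C\Γ) of subsets of the coset space C\Γ modulo finite symmetric differences, with Γ acting on the right. Then the dimension over Z₂ of the space of Γ-invariant elements of E(C\Γ) equals the number of ends of the Schreier graph Sch(Γ,C,S) for any finite symmetric generating set S of Γ. -/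
/-- Right translation on the space of right cosets `C\Γ`. -/
def cosetRmul {Γ : Type*} [Group Γ] (C : Subgroup Γ) (g : Γ) :
    Quotient (QuotientGroup.rightRel C) → Quotient (QuotientGroup.rightRel C) :=
  Quotient.map' (· * g) (fun a b hab => by
    have h : b * a⁻¹ ∈ C := QuotientGroup.rightRel_apply.mp hab
    exact QuotientGroup.rightRel_apply.mpr (by simpa [mul_assoc, mul_inv_rev] using h))

/-- The `ZMod 2`-submodule of finitely supported functions `X → ZMod 2`; identifying subsets of
`X` with their indicator functions, this is the subspace of finite subsets of `X`. -/
def finSupportSubmodule (X : Type*) : Submodule (ZMod 2) (X → ZMod 2) where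
  carrier := {f | (Function.support f).Finite}
  zero_mem' := by simp
  add_mem' := by
    intro a b ha hb
    exact (ha.union hb).subset (Function.support_add a b)
  smul_mem' := by
    intro c f hf
    refine hf.subset ?_
    intro x hx
    simp only [Function.mem_support, Pi.smul_apply, smul_eq_mul] at hx ⊢
    intro h0
    exact hx (by rw [h0, mul_zero])

/-- The `ZMod 2`-submodule of functions on the coset space `C\Γ` (identified with subsets of
`C\Γ`) whose every right translate differs from them on only finitely many points. -/
def invariantModFinite {Γ : Type*} [Group Γ] (C : Subgroup Γ) :
    Submodule (ZMod 2) (Quotient (QuotientGroup.rightRel C) → ZMod 2) where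
  carrier := {f | ∀ g : Γ, (Function.support fun x => f (cosetRmul C g x) - f x).Finite}
  zero_mem' := by intro g; simp
  add_mem' := by
    intro a b ha hb g
    refine ((ha g).union (hb g)).subset ?_
    intro x hx
    simp only [Function.mem_support, Set.mem_union] at hx ⊢
    by_contra hcon
    push_neg at hcon
    apply hx
    simp only [Pi.add_apply]
    rw [show (a (cosetRmul C g x) + b (cosetRmul C g x)) - (a x + b x)
        = (a (cosetRmul C g x) - a x) + (b (cosetRmul C g x) - b x) by ring,
      hcon.1, hcon.2, add_zero]
  smul_mem' := by
    intro c f hf g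
    refine (hf g).subset ?_
    intro x hx
    simp only [Function.mem_support, Pi.smul_apply, smul_eq_mul] at hx ⊢
    intro h0
    apply hx
    rw [show c * f (cosetRmul C g x) - c * f x = c * (f (cosetRmul C g x) - f x) by ring,
      h0, mul_zero]

/-!
Call the boundary of `f : V → R` on a graph the set of vertices at which `f` is not locally
constant. On the Schreier graph, `f` is `Γ`-invariant modulo finite sets exactly when its boundary
is finite, because `S` generates `Γ`. If a finite set `K` contains the boundary of `f`, then `f` is
constant on every component of the complement of `K`, so modulo finitely supported functions it is
a combination of indicators of the infinite components; these indicators, having disjoint infinite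
supports, are independent modulo finitely supported functions. Hence a finite independent family
in the quotient is no larger than the number of infinite components outside some `K`, while each
`K` contributes that many independent classes. Since `Γ` is finitely generated, hence countable,
the quotient is spanned by countably many of these classes, which settles the case of infinitely
many ends.
-/

open Cardinal

universe u v

def finiteSupportSubmodule (R X : Type*) [Semiring R] : Submodule R (X → R) where
  carrier := {f | (Function.support f).Finite}
  zero_mem' := by simp
  add_mem' hf hg := (hf.union hg).subset (Function.support_add _ _)
  smul_mem' c f hf := hf.subset (Function.support_const_smul_subset c f)

@[simp]
lemma mem_finiteSupportSubmodule {R X : Type*} [Semiring R] {f : X → R} :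
    f ∈ finiteSupportSubmodule R X ↔ (Function.support f).Finite :=
  Iff.rfl

lemma finSupportSubmodule_eq_finiteSupportSubmodule (X : Type*) :
    finSupportSubmodule X = finiteSupportSubmodule (ZMod 2) X := rfl

lemma linearIndependent_mkQ_indicator {R X ι : Type*} [Ring R] {A : ι → Set X}
    (hdisj : Pairwise fun i j => Disjoint (A i) (A j)) (hinf : ∀ i, (A i).Infinite) :
    LinearIndependent R fun i => (finiteSupportSubmodule R X).mkQ ((A i).indicator 1) := by
  classical
  rw [linearIndependent_iff']
  intro t g hsum i hi
  have hfin : (Function.support (∑ j ∈ t, g j • (A j).indicator (1 : X → R))).Finite := by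
    have hzero : (finiteSupportSubmodule R X).mkQ (∑ j ∈ t, g j • (A j).indicator 1) = 0 := by
      simpa only [map_sum, map_smul] using hsum
    exact (Submodule.Quotient.mk_eq_zero _).mp hzero
  by_contra hgi
  refine hinf i (hfin.subset fun x hx => ?_)
  have hsingle : ∀ j ∈ t, j ≠ i → (g j • (A j).indicator (1 : X → R)) x = 0 :=
    fun j _ hji => by simp [Set.indicator_of_notMem ((hdisj hji).notMem_of_mem_right hx)]
  rw [Function.mem_support, Finset.sum_apply, Finset.sum_eq_single_of_mem i hi hsingle]
  simpa [Set.indicator_of_mem hx] using hgi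

lemma rank_le_of_forall_finset_card_le {R M : Type*} [Semiring R] [AddCommMonoid M] [Module R M]
    {κ : Cardinal} (hM : Module.rank R M ≤ ℵ₀)
    (h : ∀ s : Finset M, LinearIndependent R (fun i : s => (i : M)) →
      (s.card : Cardinal) ≤ κ) :
    Module.rank R M ≤ κ := by
  rcases lt_or_ge κ ℵ₀ with hκ | hκ
  · obtain ⟨n, rfl⟩ := lt_aleph0.1 hκ
    exact rank_le fun s hs => by exact_mod_cast h s hs
  · exact hM.trans hκ

namespace SimpleGraph

variable {V : Type u} (G : SimpleGraph V)

def boundary {α : Type*} (f : V → α) : Set V :=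
  {x | ∃ y, G.Adj x y ∧ f x ≠ f y}

variable {G}

lemma boundary_const {α : Type*} (a : α) : G.boundary (fun _ => a) = ∅ := by
  simp [boundary]

lemma boundary_add {α : Type*} [Add α] (f g : V → α) :
    G.boundary (f + g) ⊆ G.boundary f ∪ G.boundary g := by
  rintro x ⟨y, hxy, hne⟩
  by_cases hf : f x = f y
  · exact .inr ⟨y, hxy, fun hg => hne (by simp [hf, hg])⟩
  · exact .inl ⟨y, hxy, hf⟩

lemma boundary_smul {α β : Type*} [SMul α β] (c : α) (f : V → β) :
    G.boundary (c • f) ⊆ G.boundary f := by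
  rintro x ⟨y, hxy, hne⟩
  exact ⟨y, hxy, fun h => hne (by simp [h])⟩

variable (G) in
def finiteBoundarySubmodule (R : Type*) [Semiring R] : Submodule R (V → R) where
  carrier := {f | (G.boundary f).Finite}
  zero_mem' := by simp [Pi.zero_def, boundary_const]
  add_mem' hf hg := (hf.union hg).subset (boundary_add _ _)
  smul_mem' c _ hf := hf.subset (boundary_smul c _)

section ComponentCompl

variable {K : Set V}

lemma ComponentCompl.mem_iff_eq_mk {C : G.ComponentCompl K} {x : V} (hx : x ∉ K) :
    x ∈ C ↔ G.componentComplMk hx = C :=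
  ⟨fun ⟨_, h⟩ => h, fun h => ⟨hx, h⟩⟩

lemma ComponentCompl.coe_eq_image_supp (C : G.ComponentCompl K) :
    (C : Set V) = Subtype.val '' ConnectedComponent.supp C := by
  ext x
  constructor
  · rintro ⟨hx, rfl⟩
    exact ⟨⟨x, hx⟩, rfl, rfl⟩
  · rintro ⟨y, hy, rfl⟩
    exact ⟨y.2, hy⟩

lemma ComponentCompl.infinite_coe_iff (C : G.ComponentCompl K) :
    (C : Set V).Infinite ↔ (ConnectedComponent.supp C).Infinite := by
  rw [C.coe_eq_image_supp, Set.infinite_image_iff Subtype.val_injective.injOn]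

lemma ComponentCompl.boundary_indicator_subset {R : Type*} [Zero R] [One R]
    (C : G.ComponentCompl K) :
    G.boundary ((C : Set V).indicator (1 : V → R)) ⊆ K ∪ ⋃ k ∈ K, G.neighborSet k := by
  rintro x ⟨y, hxy, hne⟩
  by_cases hxK : x ∈ K
  · exact .inl hxK
  refine .inr (Set.mem_biUnion (x := y) ?_ hxy.symm)
  by_contra hyK
  have hxy_mem : x ∈ C ↔ y ∈ C :=
    ⟨fun hx => C.mem_of_adj x y hx hyK hxy, fun hy => C.mem_of_adj y x hy hxK hxy.symm⟩
  exact hne (by by_cases hx : x ∈ C <;> simp_all)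

lemma ComponentCompl.indicator_mem_finiteBoundarySubmodule {R : Type*} [Semiring R]
    [G.LocallyFinite] {K : Finset V} (C : G.ComponentCompl K) :
    (C : Set V).indicator 1 ∈ G.finiteBoundarySubmodule R :=
  ((K.finite_toSet.union (K.finite_toSet.biUnion fun k _ => (G.neighborSet k).toFinite))).subset
    C.boundary_indicator_subset

end ComponentCompl

section FiniteBoundaryQuotient

variable (G) (R : Type v) [Ring R]

abbrev FiniteBoundaryQuotient : Type (max u v) :=
  ↥(G.finiteBoundarySubmodule R) ⧸
    (finiteSupportSubmodule R V).comap (G.finiteBoundarySubmodule R).subtype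

variable {G R} [G.LocallyFinite]

variable (R) in
noncomputable def componentClass (K : Finset V) (C : G.ComponentCompl K) :
    G.FiniteBoundaryQuotient R :=
  Submodule.Quotient.mk ⟨_, C.indicator_mem_finiteBoundarySubmodule⟩

lemma linearIndependent_componentClass (K : Finset V) :
    LinearIndependent R fun C : {C : G.ComponentCompl K // (C : Set V).Infinite} =>
      componentClass R K C.1 :=
  LinearIndependent.of_comp (Submodule.mapQ _ _ (G.finiteBoundarySubmodule R).subtype le_rfl) <|
    linearIndependent_mkQ_indicator
      (ComponentCompl.pairwise_disjoint.comp_of_injective Subtype.val_injective) fun C => C.2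

lemma exists_sub_sum_indicator_finite_support (hG : G.Preconnected) {f : V → R}
    {K : Finset V} (hK : G.boundary f ⊆ K) :
    ∃ (T : Finset {C : G.ComponentCompl K // (C : Set V).Infinite})
      (a : G.ComponentCompl K → R),
      (Function.support (f - ∑ C ∈ T, a C • (C.1 : Set V).indicator 1)).Finite := by
  classical
  have : Fact G.Preconnected := ⟨hG⟩
  have := Fintype.ofFinite (G.ComponentCompl K)
  let a : G.ComponentCompl K → R :=
    ComponentCompl.lift (fun v _ => f v) fun v w hv _ hvw =>
      by_contra fun h => hv (hK ⟨w, hvw, h⟩)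
  refine ⟨Finset.univ, a, (K.finite_toSet.union <| Set.finite_iUnion
    fun C : {C : G.ComponentCompl K // (C : Set V).Finite} => C.2).subset fun x hx => ?_⟩
  by_cases hxK : x ∈ K
  · exact .inl hxK
  by_cases hfin : (G.componentComplMk hxK : Set V).Finite
  · exact .inr (Set.mem_iUnion.2 ⟨⟨_, hfin⟩, G.componentComplMk_mem hxK⟩)
  refine absurd ?_ hx
  have hsum : (∑ C : {C : G.ComponentCompl K // (C : Set V).Infinite},
      a C • (C.1 : Set V).indicator (1 : V → R)) x = f x := by
    rw [Finset.sum_apply, Finset.sum_eq_single_of_mem ⟨_, hfin⟩ (Finset.mem_univ _)]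
    · simp only [Pi.smul_apply, Set.indicator_of_mem (G.componentComplMk_mem hxK), Pi.one_apply,
        smul_eq_mul, mul_one]
      rfl
    · rintro C - hC
      have hxC : x ∉ (C.1 : Set V) := fun h =>
        hC (Subtype.ext ((ComponentCompl.mem_iff_eq_mk hxK).1 h).symm)
      simp [Set.indicator_of_notMem hxC]
  simp [hsum]

lemma mk_mem_span_componentClass (hG : G.Preconnected) (f : G.finiteBoundarySubmodule R)
    {K : Finset V} (hK : G.boundary (f : V → R) ⊆ K) :
    Submodule.Quotient.mk f ∈ Submodule.span R (Set.range
      fun C : {C : G.ComponentCompl K // (C : Set V).Infinite} => componentClass R K C.1) := by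
  obtain ⟨T, a, hfin⟩ := exists_sub_sum_indicator_finite_support hG hK
  have hmk : Submodule.Quotient.mk f = ∑ C ∈ T, a C • componentClass R K C.1 := by
    have hzero : Submodule.Quotient.mk (p := (finiteSupportSubmodule R V).comap
        (G.finiteBoundarySubmodule R).subtype)
        (f - ∑ C ∈ T, a C • ⟨_, C.1.indicator_mem_finiteBoundarySubmodule⟩) = 0 :=
      (Submodule.Quotient.mk_eq_zero _).2 (by simpa using hfin)
    rw [Submodule.Quotient.mk_sub, sub_eq_zero] at hzero
    rw [hzero, ← Submodule.mkQ_apply, map_sum]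
    simp only [map_smul, Submodule.mkQ_apply, componentClass]
  rw [hmk]
  exact Submodule.sum_mem _ fun C _ => Submodule.smul_mem _ _ (Submodule.subset_span ⟨C, rfl⟩)

lemma exists_subset_span_componentClass (hG : G.Preconnected)
    (s : Finset (G.FiniteBoundaryQuotient R)) :
    ∃ K : Finset V, (s : Set (G.FiniteBoundaryQuotient R)) ⊆ Submodule.span R (Set.range
      fun C : {C : G.ComponentCompl K // (C : Set V).Infinite} => componentClass R K C.1) := by
  classical
  choose f hf using fun q : G.FiniteBoundaryQuotient R => Submodule.Quotient.mk_surjective _ q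
  have hfin (q) : (G.boundary (f q : V → R)).Finite := (f q).2
  refine ⟨s.biUnion fun q => (hfin q).toFinset, fun q hq => ?_⟩
  rw [← hf q]
  exact mk_mem_span_componentClass hG (f q) fun x hx =>
    Finset.mem_biUnion.2 ⟨q, hq, (hfin q).mem_toFinset.2 hx⟩

lemma span_componentClass_eq_top (hG : G.Preconnected) :
    Submodule.span R (Set.range fun p : Σ K : Finset V,
      {C : G.ComponentCompl K // (C : Set V).Infinite} => componentClass R p.1 p.2.1) = ⊤ := by
  refine Submodule.eq_top_iff'.2 fun q => ?_
  obtain ⟨f, rfl⟩ := Submodule.Quotient.mk_surjective _ q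
  have hfin : (G.boundary (f : V → R)).Finite := f.2
  refine Submodule.span_mono ?_ (mk_mem_span_componentClass hG f (K := hfin.toFinset) (by simp))
  rintro _ ⟨C, rfl⟩
  exact ⟨⟨_, C⟩, rfl⟩

variable [StrongRankCondition R]

lemma rank_finiteBoundaryQuotient_le_aleph0 [Countable V] (hG : G.Preconnected) :
    Module.rank R (G.FiniteBoundaryQuotient R) ≤ ℵ₀ := by
  have : Fact G.Preconnected := ⟨hG⟩
  rw [← rank_top, ← span_componentClass_eq_top hG]
  exact (rank_span_le _).trans (mk_le_aleph0_iff.2 (Set.countable_range _).to_subtype)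

variable (R) in
theorem rank_finiteBoundaryQuotient [Countable V] (hG : G.Preconnected) :
    Module.rank R (G.FiniteBoundaryQuotient R) = Cardinal.lift.{v}
      (⨆ K : Finset V,
        #{c : (G.induce (K : Set V)ᶜ).ConnectedComponent // c.supp.Infinite}) := by
  have hcard (K : Finset V) :
      #{c : (G.induce (K : Set V)ᶜ).ConnectedComponent // c.supp.Infinite} =
        #{C : G.ComponentCompl K // (C : Set V).Infinite} :=
    mk_congr (Equiv.subtypeEquivRight fun C => (ComponentCompl.infinite_coe_iff C).symm)
  simp_rw [hcard]
  refine le_antisymm ?_ ?_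
  · refine rank_le_of_forall_finset_card_le (rank_finiteBoundaryQuotient_le_aleph0 hG)
      fun s hs => ?_
    obtain ⟨K, hK⟩ := exists_subset_span_componentClass hG s
    calc (s.card : Cardinal) = Module.rank R (Submodule.span R (s : Set _)) := by
          rw [rank_span_set hs]
          simp
      _ ≤ Module.rank R (Submodule.span R (Set.range fun C : {C : G.ComponentCompl K //
          (C : Set V).Infinite} => componentClass R K C.1)) :=
        Submodule.rank_mono (Submodule.span_le.2 hK)
      _ ≤ lift.{v} #{C : G.ComponentCompl K // (C : Set V).Infinite} :=
        (rank_span_le _).trans (by rw [← lift_le.{u}, lift_lift]; exact mk_range_le_lift)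
      _ ≤ _ := lift_le.2 (le_ciSup (bddAbove_of_small) K)
  · rw [lift_iSup (bddAbove_of_small)]
    have := nontrivial_of_invariantBasisNumber R
    refine ciSup_le' fun K => ?_
    rw [← lift_le.{u}, lift_lift]
    exact (linearIndependent_componentClass K).cardinal_lift_le_rank

end FiniteBoundaryQuotient

end SimpleGraph

section SchreierGraph

variable {Γ : Type*} [Group Γ]

lemma countable_of_closure_eq_top {S : Set Γ} (hS : S.Countable)
    (hgen : Subgroup.closure S = ⊤) : Countable Γ := by
  have := hS.to_subtype
  exact (FreeGroup.lift_surjective_iff_closure_range_eq_top.2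
    (by rwa [Subtype.range_coe])).countable

variable (C : Subgroup Γ)

lemma cosetRmul_mk (g a : Γ) : cosetRmul C g (Quotient.mk _ a) = Quotient.mk _ (a * g) := rfl

lemma cosetRmul_mul (g h : Γ) (x : Quotient (QuotientGroup.rightRel C)) :
    cosetRmul C (g * h) x = cosetRmul C h (cosetRmul C g x) := by
  induction x using Quotient.ind
  simp only [cosetRmul_mk, mul_assoc]

lemma cosetRmul_one (x : Quotient (QuotientGroup.rightRel C)) : cosetRmul C 1 x = x := by
  induction x using Quotient.ind
  simp only [cosetRmul_mk, mul_one]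

lemma cosetRmul_inv_cosetRmul (g : Γ) (x : Quotient (QuotientGroup.rightRel C)) :
    cosetRmul C g⁻¹ (cosetRmul C g x) = x := by
  rw [← cosetRmul_mul, mul_inv_cancel, cosetRmul_one]

lemma cosetRmul_cosetRmul_inv (g : Γ) (x : Quotient (QuotientGroup.rightRel C)) :
    cosetRmul C g (cosetRmul C g⁻¹ x) = x := by
  simpa using cosetRmul_inv_cosetRmul C g⁻¹ x

lemma cosetRmul_injective (g : Γ) : Function.Injective (cosetRmul C g) :=
  Function.LeftInverse.injective (cosetRmul_inv_cosetRmul C g)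

variable {C} {S : Set Γ}

lemma schreierGraph_adj_cosetRmul {s : Γ} (hs : s ∈ S) {x : Quotient (QuotientGroup.rightRel C)}
    (hx : x ≠ cosetRmul C s x) : (schreierGraph C S).Adj x (cosetRmul C s x) := by
  induction x using Quotient.ind with
  | _ a => exact ⟨hx, s, hs, a, .inl ⟨rfl, rfl⟩⟩

lemma exists_of_schreierGraph_adj {x y : Quotient (QuotientGroup.rightRel C)}
    (h : (schreierGraph C S).Adj x y) :
    ∃ s ∈ S, y = cosetRmul C s x ∨ x = cosetRmul C s y := by
  obtain ⟨-, s, hs, a, ⟨rfl, rfl⟩ | ⟨rfl, rfl⟩⟩ := h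
  exacts [⟨s, hs, .inl rfl⟩, ⟨s, hs, .inr rfl⟩]

lemma schreierGraph_neighborSet_subset (x : Quotient (QuotientGroup.rightRel C)) :
    (schreierGraph C S).neighborSet x ⊆
      (fun s => cosetRmul C s x) '' S ∪ (fun s => cosetRmul C s⁻¹ x) '' S := by
  intro y hxy
  obtain ⟨s, hs, rfl | rfl⟩ := exists_of_schreierGraph_adj hxy
  exacts [.inl ⟨s, hs, rfl⟩, .inr ⟨s, hs, cosetRmul_inv_cosetRmul C s y⟩]

noncomputable instance (S : Finset Γ) : (schreierGraph C (S : Set Γ)).LocallyFinite := fun x =>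
  ((S.finite_toSet.image _).union (S.finite_toSet.image _)).subset
    (schreierGraph_neighborSet_subset x) |>.fintype

lemma schreierGraph_preconnected (hgen : Subgroup.closure S = ⊤) :
    (schreierGraph C S).Preconnected := by
  suffices h : ∀ g : Γ, ∀ x, (schreierGraph C S).Reachable x (cosetRmul C g x) by
    refine Quotient.ind₂ fun a b => ?_
    simpa [cosetRmul_mk] using h (a⁻¹ * b) (Quotient.mk _ a)
  intro g
  induction (hgen ▸ Subgroup.mem_top g : g ∈ Subgroup.closure S) using
    Subgroup.closure_induction with
  | mem s hs =>
    intro x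
    by_cases hx : x = cosetRmul C s x
    · rw [← hx]
    · exact (schreierGraph_adj_cosetRmul hs hx).reachable
  | one => intro x; rw [cosetRmul_one]
  | mul g h _ _ hg hh => intro x; rw [cosetRmul_mul]; exact (hg x).trans (hh _)
  | inv g _ hg =>
    intro x
    simpa [← cosetRmul_mul, cosetRmul_one] using (hg (cosetRmul C g⁻¹ x)).symm

lemma invariantModFinite_eq_finiteBoundarySubmodule (hS : S.Finite)
    (hgen : Subgroup.closure S = ⊤) :
    invariantModFinite C = (schreierGraph C S).finiteBoundarySubmodule (ZMod 2) := by
  ext f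
  constructor
  · intro hf
    refine (hS.biUnion fun s _ => (hf s).union (hf s⁻¹)).subset ?_
    rintro x ⟨y, hxy, hne⟩
    obtain ⟨s, hs, rfl | rfl⟩ := exists_of_schreierGraph_adj hxy
    · exact Set.mem_biUnion hs (.inl (sub_ne_zero.2 hne.symm))
    · refine Set.mem_biUnion hs (.inr (sub_ne_zero.2 ?_))
      rwa [cosetRmul_inv_cosetRmul, ne_comm]
  · intro hf g
    induction (hgen ▸ Subgroup.mem_top g : g ∈ Subgroup.closure S) using
      Subgroup.closure_induction with
    | mem s hs =>
      refine hf.subset fun x hx => ?_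
      have hne : f (cosetRmul C s x) ≠ f x := sub_ne_zero.1 hx
      exact ⟨_, schreierGraph_adj_cosetRmul hs fun h => hne (by rw [← h]), hne.symm⟩
    | one => simp [cosetRmul_one]
    | mul g h _ _ hg hh =>
      have hsplit : (fun x => f (cosetRmul C (g * h) x) - f x) =
          (fun x => f (cosetRmul C h x) - f x) ∘ cosetRmul C g +
            fun x => f (cosetRmul C g x) - f x := by
        ext x
        simp [cosetRmul_mul]
      rw [hsplit]
      refine ((hh.preimage (cosetRmul_injective C g).injOn).union hg).subset ?_
      rw [← Function.support_comp_eq_preimage]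
      exact Function.support_add (M := ZMod 2) _ _
    | inv g _ hg =>
      refine (hg.image (cosetRmul C g)).subset fun x hx =>
        ⟨cosetRmul C g⁻¹ x, ?_, cosetRmul_cosetRmul_inv C g x⟩
      have hne : f (cosetRmul C g⁻¹ x) ≠ f x := sub_ne_zero.1 hx
      show f (cosetRmul C g (cosetRmul C g⁻¹ x)) - f (cosetRmul C g⁻¹ x) ≠ 0
      rw [cosetRmul_cosetRmul_inv]
      exact sub_ne_zero.2 hne.symm

end SchreierGraph

theorem stmt_19_general {Γ : Type*} [Group Γ] (C : Subgroup Γ) (S : Finset Γ)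
    (hgen : Subgroup.closure (S : Set Γ) = ⊤) :
    Module.rank (ZMod 2)
      (↥(invariantModFinite C) ⧸
        (finSupportSubmodule (Quotient (QuotientGroup.rightRel C))).comap
          (invariantModFinite C).subtype) =
    ⨆ D : Finset (Quotient (QuotientGroup.rightRel C)),
      Cardinal.mk {c : ((schreierGraph C (S : Set Γ)).induce
          ((↑D : Set (Quotient (QuotientGroup.rightRel C)))ᶜ)).ConnectedComponent //
        c.supp.Infinite} := by
  have := countable_of_closure_eq_top S.countable_toSet hgen
  rw [invariantModFinite_eq_finiteBoundarySubmodule S.finite_toSet hgen,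
    finSupportSubmodule_eq_finiteSupportSubmodule]
  simpa using (schreierGraph C S).rank_finiteBoundaryQuotient (ZMod 2)
    (schreierGraph_preconnected hgen)

/-- The dimension over `ℤ/2` of the space of `Γ`-invariant elements of `E(C\Γ)` (subsets of the
coset space modulo finite symmetric differences) equals the number of ends of the Schreier
graph `Sch(Γ,C,S)`, for any finite symmetric generating set `S` of `Γ`. -/
theorem stmt_19 {Γ : Type*} [Group Γ] (C : Subgroup Γ) (S : Finset Γ)
    (hsym : ∀ s ∈ S, s⁻¹ ∈ S) (hgen : Subgroup.closure (S : Set Γ) = ⊤) :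
    Module.rank (ZMod 2)
      (↥(invariantModFinite C) ⧸
        (finSupportSubmodule (Quotient (QuotientGroup.rightRel C))).comap
          (invariantModFinite C).subtype) =
    ⨆ D : Finset (Quotient (QuotientGroup.rightRel C)),
      Cardinal.mk {c : ((schreierGraph C (S : Set Γ)).induce
          ((↑D : Set (Quotient (QuotientGroup.rightRel C)))ᶜ)).ConnectedComponent //
        c.supp.Infinite} :=
  stmt_19_general C S hgen
end
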